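/- arXiv:math/0703780 — 2 statements merged into one kernel-verified Lean document; each statement's English description precedes it below -/
import Mathlib

section
/- Let (R,d) be a commutative λ-differential k-algebra. The map η: R → DR defined by η(x)(n) = d^n(x) is a homomorphism of λ-differential algebras: it is a k-algebra homomorphism into the λ-Hurwitz series algebra DR, and ∂_R ∘ η = η ∘ d. -/
/-
On binary functions `F : R → R → R`, precomposition with `d` in the first and in the second
argument gives commuting operators `L` and `Rt`, and the λ-Leibniz rule says that postcomposing
the multiplication with `d` is applying `L + Rt + λ L Rt` to it. Postcomposition with `d`
commutes with `L` and `Rt`, so `dⁿ(x y)` is `(L + Rt + λ L Rt)ⁿ` applied to the multiplication,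
and expanding this trinomial of commuting operators yields the coefficients of the λ-Hurwitz
product.
-/

/-- The λ-Hurwitz product on `A^ℕ`. -/
def hurwitzMul {k A : Type*} [CommRing k] [CommRing A] [Algebra k A]
    (lam : k) (f g : ℕ → A) : ℕ → A :=
  fun n => ∑ i ∈ Finset.range (n + 1), ∑ j ∈ Finset.range (n - i + 1),
    (n.choose i * (n - i).choose j) • (lam ^ i • (f (n - j) * g (i + j)))

/-- The identity of the λ-Hurwitz product. -/
def hurwitzOne {A : Type*} [One A] [Zero A] : ℕ → A :=
  fun n => if n = 0 then 1 else 0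

/-- The shift operator on λ-Hurwitz series. -/
def hurwitzShift {A : Type*} (f : ℕ → A) : ℕ → A := fun n => f (n + 1)

open Finset

theorem Commute.add_add_smul_mul_pow {k A : Type*} [CommSemiring k] [Semiring A] [Algebra k A]
    {a b : A} (h : Commute a b) (lam : k) (n : ℕ) :
    (a + b + lam • (a * b)) ^ n = ∑ i ∈ range (n + 1), ∑ j ∈ range (n - i + 1),
      (n.choose i * (n - i).choose j) • (lam ^ i • (a ^ (n - j) * b ^ (i + j))) := by
  have hab : Commute (lam • (a * b)) (b + a) :=
    ((h.mul_left (Commute.refl b)).add_right ((Commute.refl a).mul_left h.symm)).smul_left lam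
  rw [add_comm, add_comm a, hab.add_pow]
  refine sum_congr rfl fun i hi => ?_
  rw [h.symm.add_pow, mul_sum, sum_mul]
  refine sum_congr rfl fun j hj => ?_
  have hin : i ≤ n := Nat.lt_succ_iff.mp (mem_range.mp hi)
  have hjn : j ≤ n - i := Nat.lt_succ_iff.mp (mem_range.mp hj)
  have hexp : a ^ i * b ^ i * (b ^ j * a ^ (n - i - j)) = a ^ (n - j) * b ^ (i + j) := by
    rw [mul_assoc, ← mul_assoc (b ^ i), ← pow_add, ((h.pow_pow _ _).symm).eq, ← mul_assoc,
      ← pow_add, show i + (n - i - j) = n - j by omega]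
  rw [smul_pow, h.mul_pow, ← nsmul_eq_mul', ← nsmul_eq_mul', mul_smul_comm, smul_mul_assoc,
    hexp, mul_smul]

theorem Commute.pow_smul_eq_pow_smul {G X : Type*} [Monoid G] [MulAction G X] {p t : G}
    (h : Commute p t) {x : X} (hx : p • x = t • x) (n : ℕ) : p ^ n • x = t ^ n • x := by
  induction n with
  | zero => simp
  | succ n ih => rw [pow_succ, mul_smul, hx, ← mul_smul, (h.pow_left n).eq, mul_smul, ih,
      ← mul_smul, ← pow_succ']

namespace BinaryFunction

variable {k M N : Type*} [Semiring k] [AddCommMonoid N] [Module k N]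

def precompLeft (f : M → M) : Module.End k (M → M → N) where
  toFun F x y := F (f x) y
  map_add' _ _ := rfl
  map_smul' _ _ := rfl

def precompRight (f : M → M) : Module.End k (M → M → N) where
  toFun F x y := F x (f y)
  map_add' _ _ := rfl
  map_smul' _ _ := rfl

def postcomp (g : N →ₗ[k] N) : Module.End k (M → M → N) where
  toFun F x y := g (F x y)
  map_add' F G := by ext; simp
  map_smul' c F := by ext; simp

@[simp] theorem precompLeft_apply (f : M → M) (F : M → M → N) (x y : M) :
    precompLeft (k := k) f F x y = F (f x) y := rfl

@[simp] theorem precompRight_apply (f : M → M) (F : M → M → N) (x y : M) :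
    precompRight (k := k) f F x y = F x (f y) := rfl

@[simp] theorem postcomp_apply (g : N →ₗ[k] N) (F : M → M → N) (x y : M) :
    postcomp g F x y = g (F x y) := rfl

theorem precompLeft_pow (f : M → M) (n : ℕ) :
    precompLeft (k := k) (N := N) f ^ n = precompLeft f^[n] := by
  induction n with
  | zero => rfl
  | succ n ih => ext; simp [pow_succ', ih]

theorem precompRight_pow (f : M → M) (n : ℕ) :
    precompRight (k := k) (N := N) f ^ n = precompRight f^[n] := by
  induction n with
  | zero => rfl
  | succ n ih => ext; simp [pow_succ', ih]

theorem postcomp_pow (g : N →ₗ[k] N) (n : ℕ) :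
    postcomp (M := M) g ^ n = postcomp (g ^ n) := by
  induction n with
  | zero => rfl
  | succ n ih => ext; simp [pow_succ', ih, Module.End.mul_apply]

theorem commute_precompLeft_precompRight (f g : M → M) :
    Commute (precompLeft (k := k) (N := N) f) (precompRight g) := rfl

theorem commute_postcomp_precompLeft (g : N →ₗ[k] N) (f : M → M) :
    Commute (postcomp g) (precompLeft f) := rfl

theorem commute_postcomp_precompRight (g : N →ₗ[k] N) (f : M → M) :
    Commute (postcomp g) (precompRight f) := rfl

end BinaryFunction

open BinaryFunction in
theorem iterate_map_mul_of_leibniz {k R : Type*} [CommSemiring k] [Semiring R] [Algebra k R]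
    (lam : k) (d : R →ₗ[k] R)
    (hleib : ∀ x y : R, d (x * y) = d x * y + x * d y + lam • (d x * d y)) (n : ℕ) (x y : R) :
    d^[n] (x * y) = ∑ i ∈ range (n + 1), ∑ j ∈ range (n - i + 1),
      (n.choose i * (n - i).choose j) • (lam ^ i • (d^[n - j] x * d^[i + j] y)) := by
  set L : Module.End k (R → R → R) := precompLeft d
  set Rt : Module.End k (R → R → R) := precompRight d
  have hL := commute_postcomp_precompLeft d d
  have hRt := commute_postcomp_precompRight d d
  have hcomm : Commute (postcomp d) (L + Rt + lam • (L * Rt)) :=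
    (hL.add_right hRt).add_right ((hL.mul_right hRt).smul_right lam)
  have hmul : postcomp d (fun x y : R => x * y) =
      (L + Rt + lam • (L * Rt)) (fun x y => x * y) := by
    ext x y
    simp [L, Rt, hleib]
  have key := congr_fun₂ (hcomm.pow_smul_eq_pow_smul hmul n) x y
  rw [(commute_precompLeft_precompRight d d).add_add_smul_mul_pow] at key
  simpa [postcomp_pow, L, Rt, precompLeft_pow, precompRight_pow, Module.End.pow_apply,
    Finset.sum_apply, mul_assoc] using key

/-- For a commutative λ-differential algebra `(R, d)`, the map `η(x)(n) = d^n(x)`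
is a morphism of λ-differential algebras from `R` to the λ-Hurwitz series algebra
`DR`: it is a `k`-algebra homomorphism intertwining `d` with the shift. -/
theorem iterated_derivative_map_is_differential_hom
    (k R : Type*) [CommRing k] [CommRing R] [Algebra k R]
    (lam : k) (d : R →ₗ[k] R)
    (hleib : ∀ x y : R, d (x * y) = d x * y + x * d y + lam • (d x * d y))
    (hone : d 1 = 0)
    (η : R → ℕ → R) (hη : ∀ (x : R) (n : ℕ), η x n = (⇑d)^[n] x) :
    (∀ x y : R, η (x * y) = hurwitzMul lam (η x) (η y)) ∧
    (η 1 = hurwitzOne) ∧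
    (∀ x y : R, η (x + y) = η x + η y) ∧
    (∀ (c : k) (x : R), η (c • x) = c • η x) ∧
    (∀ x : R, hurwitzShift (η x) = η (d x)) := by
  have hη' (x : R) (n : ℕ) : η x n = (d ^ n) x := by rw [hη, Module.End.pow_apply]
  refine ⟨fun x y => ?_, ?_, fun x y => ?_, fun c x => ?_, fun x => ?_⟩
  · ext n
    simp only [hurwitzMul, hη]
    exact iterate_map_mul_of_leibniz lam d hleib n x y
  · ext (_ | n)
    · simp [hη, hurwitzOne]
    · simp [hη, hurwitzOne, hone, Function.iterate_fixed (map_zero d)]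
  · ext n
    simp [hη']
  · ext n
    simp [hη']
  · ext n
    simp [hurwitzShift, hη, Function.iterate_succ_apply]
end

section
/- The functor G: Alg_k → Dif_λ sending A to the λ-Hurwitz series algebra (DA, ∂_A) is right adjoint to the forgetful functor V: Dif_λ → Alg_k. Equivalently, for any λ-differential k-algebra (R,d), any k-algebra A, and any k-algebra homomorphism f: R → A, there is a unique λ-differential algebra morphism f̃: (R,d) → (DA, ∂_A) with ε_A ∘ f̃ = f, where ε_A(g) = g(0). -/
open Finset

/-- The ordinary (λ = 0) Hurwitz product. -/
def hurwitzConv {A : Type*} [CommRing A] (f g : ℕ → A) (m : ℕ) : A :=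
  ∑ ij ∈ antidiagonal m, m.choose ij.1 • (f ij.2 * g ij.1)

theorem Finset.Nat.sum_antidiagonal_choose_succ_nsmul' {M : Type*} [AddCommMonoid M]
    (F : ℕ → ℕ → M) (n : ℕ) :
    ∑ ij ∈ antidiagonal (n + 1), (n + 1).choose ij.1 • F ij.1 ij.2 =
      ∑ ij ∈ antidiagonal n, n.choose ij.1 • F ij.1 (ij.2 + 1) +
        ∑ ij ∈ antidiagonal n, n.choose ij.1 • F (ij.1 + 1) ij.2 := by
  rw [Finset.sum_antidiagonal_choose_succ_nsmul]
  congr 1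
  refine sum_congr rfl fun ij hij => ?_
  rw [Nat.choose_symm_of_eq_add (mem_antidiagonal.mp hij).symm]

section HurwitzSeries

variable {α : Type*}

theorem hurwitzShift_iterate_apply (f : ℕ → α) (a m : ℕ) :
    hurwitzShift^[a] f m = f (m + a) := by
  induction a generalizing f with
  | zero => rfl
  | succ a ih => rw [Function.iterate_succ_apply, ih, hurwitzShift]; rfl

theorem hurwitzShift_iterate_comm (f : ℕ → α) (a : ℕ) :
    hurwitzShift^[a] (hurwitzShift f) = hurwitzShift (hurwitzShift^[a] f) :=
  Function.iterate_succ_apply' _ _ _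

variable {A : Type*} [CommRing A]

theorem hurwitzConv_succ (f g : ℕ → A) (m : ℕ) :
    hurwitzConv f g (m + 1) = hurwitzConv (hurwitzShift f) g m + hurwitzConv f (hurwitzShift g) m :=
  Finset.Nat.sum_antidiagonal_choose_succ_nsmul' (fun i j => f j * g i) m

variable {k : Type*} [CommRing k] [Algebra k A]

theorem hurwitzMul_eq_sum_hurwitzConv (lam : k) (f g : ℕ → A) (n : ℕ) :
    hurwitzMul lam f g n = ∑ am ∈ antidiagonal n,
      n.choose am.1 • lam ^ am.1 • hurwitzConv (hurwitzShift^[am.1] f) (hurwitzShift^[am.1] g) am.2 := by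
  rw [Finset.Nat.sum_antidiagonal_eq_sum_range_succ
    (fun a m => n.choose a • lam ^ a • hurwitzConv (hurwitzShift^[a] f) (hurwitzShift^[a] g) m)]
  refine sum_congr rfl fun i hi => ?_
  rw [hurwitzConv, Finset.Nat.sum_antidiagonal_eq_sum_range_succ
    (fun j c => (n - i).choose j • (hurwitzShift^[i] f c * hurwitzShift^[i] g j)), smul_sum, smul_sum]
  refine sum_congr rfl fun j hj => ?_
  have hin := mem_range.mp hi
  have hjn := mem_range.mp hj
  rw [hurwitzShift_iterate_apply, hurwitzShift_iterate_apply, mul_nsmul', smul_comm (lam ^ i),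
    show n - i - j + i = n - j by omega, add_comm j i]

theorem hurwitzMul_succ (lam : k) (f g : ℕ → A) (n : ℕ) :
    hurwitzMul lam f g (n + 1) =
      hurwitzMul lam (hurwitzShift f) g n + hurwitzMul lam f (hurwitzShift g) n +
        lam • hurwitzMul lam (hurwitzShift f) (hurwitzShift g) n := by
  rw [hurwitzMul_eq_sum_hurwitzConv, Finset.Nat.sum_antidiagonal_choose_succ_nsmul'
    (fun a m => lam ^ a • hurwitzConv (hurwitzShift^[a] f) (hurwitzShift^[a] g) m)]
  simp only [hurwitzMul_eq_sum_hurwitzConv, hurwitzConv_succ, hurwitzShift_iterate_comm,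
    Function.iterate_succ_apply', smul_add, sum_add_distrib, smul_sum, pow_succ', mul_smul,
    smul_comm lam]

end HurwitzSeries

section Lift

variable {k R A : Type*} [CommRing k] [CommRing R] [Algebra k R] [CommRing A] [Algebra k A]
  (d : R →ₗ[k] R) (f : R →ₐ[k] A)

/-- The morphism `f̃ : R → DA` of the universal property. -/
def hurwitzLift (x : R) : ℕ → A := fun n => f ((d ^ n) x)

theorem hurwitzLift_apply_zero (x : R) : hurwitzLift d f x 0 = f x := rfl

theorem hurwitzLift_apply_succ (x : R) (n : ℕ) :
    hurwitzLift d f x (n + 1) = hurwitzLift d f (d x) n := by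
  rw [hurwitzLift, hurwitzLift, pow_succ, Module.End.mul_apply]

theorem hurwitzShift_hurwitzLift (x : R) :
    hurwitzShift (hurwitzLift d f x) = hurwitzLift d f (d x) :=
  funext (hurwitzLift_apply_succ d f x)

theorem hurwitzLift_add (x y : R) :
    hurwitzLift d f (x + y) = hurwitzLift d f x + hurwitzLift d f y :=
  funext fun n => by simp only [hurwitzLift, map_add, Pi.add_apply]

theorem hurwitzLift_smul (c : k) (x : R) : hurwitzLift d f (c • x) = c • hurwitzLift d f x :=
  funext fun n => by simp only [hurwitzLift, map_smul, Pi.smul_apply]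

theorem hurwitzLift_one (hone : d 1 = 0) : hurwitzLift d f 1 = hurwitzOne := by
  funext n
  cases n with
  | zero => simp [hurwitzLift, hurwitzOne]
  | succ n =>
    rw [hurwitzLift_apply_succ, hone]
    simp [hurwitzLift, hurwitzOne]

theorem hurwitzLift_mul (lam : k)
    (hleib : ∀ x y : R, d (x * y) = d x * y + x * d y + lam • (d x * d y)) (x y : R) :
    hurwitzLift d f (x * y) = hurwitzMul lam (hurwitzLift d f x) (hurwitzLift d f y) := by
  funext n
  induction n generalizing x y with
  | zero => simp [hurwitzLift, hurwitzMul]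
  | succ n ih =>
    rw [hurwitzMul_succ, hurwitzLift_apply_succ, hurwitzShift_hurwitzLift,
      hurwitzShift_hurwitzLift, ← ih, ← ih, ← ih, hleib, hurwitzLift_add, hurwitzLift_add,
      hurwitzLift_smul, Pi.add_apply, Pi.add_apply, Pi.smul_apply]

theorem eq_hurwitzLift {F : R → ℕ → A} (hshift : ∀ x, hurwitzShift (F x) = F (d x))
    (hzero : ∀ x, F x 0 = f x) : F = hurwitzLift d f := by
  funext x n
  induction n generalizing x with
  | zero => exact hzero x
  | succ n ih => rw [hurwitzLift_apply_succ, ← ih, ← hshift]; rfl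

end Lift

/-- Universal property of the λ-Hurwitz series algebra (cofreeness): for any
commutative λ-differential `k`-algebra `(R,d)`, any commutative `k`-algebra `A`
and any `k`-algebra homomorphism `f : R → A`, there is a unique morphism
`F : R → DA` of λ-differential algebras (an algebra map for the λ-Hurwitz product
intertwining `d` with the shift) such that `ε_A ∘ F = f`, where `ε_A(g) = g 0`. -/
theorem hurwitz_cofree_universal_property
    (k R A : Type*) [CommRing k] [CommRing R] [Algebra k R]
    [CommRing A] [Algebra k A]
    (lam : k) (d : R →ₗ[k] R)
    (hleib : ∀ x y : R, d (x * y) = d x * y + x * d y + lam • (d x * d y))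
    (hone : d 1 = 0)
    (f : R →ₐ[k] A) :
    ∃! F : R → ℕ → A,
      (∀ x y : R, F (x * y) = hurwitzMul lam (F x) (F y)) ∧
      (F 1 = hurwitzOne) ∧
      (∀ x y : R, F (x + y) = F x + F y) ∧
      (∀ (c : k) (x : R), F (c • x) = c • F x) ∧
      (∀ x : R, hurwitzShift (F x) = F (d x)) ∧
      (∀ x : R, F x 0 = f x) := by
  refine ⟨hurwitzLift d f, ⟨hurwitzLift_mul d f lam hleib, hurwitzLift_one d f hone,
    hurwitzLift_add d f, hurwitzLift_smul d f, hurwitzShift_hurwitzLift d f,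
    hurwitzLift_apply_zero d f⟩, ?_⟩
  rintro F ⟨-, -, -, -, hshift, hzero⟩
  exact eq_hurwitzLift d f hshift hzero
end
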